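/- arXiv:2604.21616 — 2 statements merged into one kernel-verified Lean document; each statement's English description precedes it below -/
import Mathlib

section
/- Let M = θ M' + (1−θ)G where G = ∇f(X) + Γ with E[Γ] = 0, E[‖Γ‖_F²] ≤ σ². Then E[‖M − ∇f(X)‖_F²] ≤ θ‖M' − ∇f(X')‖_F² + (1/(1−θ))‖∇f(X) − ∇f(X')‖_F² + (1−θ)²σ², where X' is the previous iterate and M', ∇f(X), ∇f(X') are deterministic. -/
open Matrix MeasureTheory

/-! Since `Γ` has mean zero, the cross term vanishes in expectation and
`E‖M − ∇f(X)‖_F² = ‖θ (M' − ∇f(X))‖_F² + (1 − θ)² E‖Γ‖_F²`. Splitting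
`M' − ∇f(X) = (M' − ∇f(X')) − (∇f(X) − ∇f(X'))`, Young's inequality bounds each entry:
`θ² (b − c)² ≤ θ b² + c² / (1 − θ)`,
with defect `(θ ((1 − θ) b + θ c)² + (1 − θ²) c²) / (1 − θ)`. -/

noncomputable def frobNorm {m n : ℕ} (A : Matrix (Fin m) (Fin n) ℝ) : ℝ :=
  Real.sqrt (∑ i, ∑ j, (A i j) ^ 2)

lemma sq_mul_sub_le_of_mem_Ioo {θ : ℝ} (hθ : θ ∈ Set.Ioo (0 : ℝ) 1) (b c : ℝ) :
    θ ^ 2 * (b - c) ^ 2 ≤ θ * b ^ 2 + 1 / (1 - θ) * c ^ 2 := by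
  obtain ⟨hθ_pos, hθ_lt_one⟩ := hθ
  have h_one_sub_pos : 0 < 1 - θ := by linarith
  rw [← sub_nonneg, show θ * b ^ 2 + 1 / (1 - θ) * c ^ 2 - θ ^ 2 * (b - c) ^ 2
      = (θ * ((1 - θ) * b + θ * c) ^ 2 + (1 - θ ^ 2) * c ^ 2) / (1 - θ) by field_simp; ring]
  have h_one_sub_sq : 0 ≤ 1 - θ ^ 2 := by nlinarith
  positivity

section Frobenius

variable {m n : ℕ}

lemma frobNorm_sq (A : Matrix (Fin m) (Fin n) ℝ) : frobNorm A ^ 2 = ∑ i, ∑ j, A i j ^ 2 := by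
  rw [frobNorm, Real.sq_sqrt (by positivity)]

lemma sq_apply_le_frobNorm_sq (A : Matrix (Fin m) (Fin n) ℝ) (i : Fin m) (j : Fin n) :
    A i j ^ 2 ≤ frobNorm A ^ 2 := by
  rw [frobNorm_sq]
  calc A i j ^ 2 ≤ ∑ j', A i j' ^ 2 :=
        Finset.single_le_sum (fun _ _ => sq_nonneg _) (Finset.mem_univ j)
    _ ≤ ∑ i', ∑ j', A i' j' ^ 2 :=
        Finset.single_le_sum (f := fun i' => ∑ j', A i' j' ^ 2)
          (fun _ _ => by positivity) (Finset.mem_univ i)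

lemma frobNorm_smul_sub_sq_le {θ : ℝ} (hθ : θ ∈ Set.Ioo (0 : ℝ) 1)
    (P Q : Matrix (Fin m) (Fin n) ℝ) :
    frobNorm (θ • (P - Q)) ^ 2 ≤ θ * frobNorm P ^ 2 + 1 / (1 - θ) * frobNorm Q ^ 2 := by
  simp only [frobNorm_sq, Finset.mul_sum, ← Finset.sum_add_distrib]
  gcongr with i _ j _
  simpa only [Matrix.smul_apply, Matrix.sub_apply, smul_eq_mul, mul_pow] using
    sq_mul_sub_le_of_mem_Ioo hθ _ _

end Frobenius

section Expectation

variable {Ω : Type*} [MeasurableSpace Ω] {μ : Measure Ω}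

lemma integral_add_mul_sq [IsProbabilityMeasure μ] {X : Ω → ℝ} (hX : Integrable X μ)
    (hX_sq : Integrable (fun ω => X ω ^ 2) μ) (hX_mean : ∫ ω, X ω ∂μ = 0) (a c : ℝ) :
    ∫ ω, (a + c * X ω) ^ 2 ∂μ = a ^ 2 + c ^ 2 * ∫ ω, X ω ^ 2 ∂μ := by
  have expand : (fun ω => (a + c * X ω) ^ 2)
      = fun ω => a ^ 2 + ((2 * a * c) * X ω + c ^ 2 * X ω ^ 2) := by
    funext ω
    ring
  have h_cross := hX.const_mul (2 * a * c)
  have h_sq := hX_sq.const_mul (c ^ 2)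
  have h_rest : Integrable (fun ω => 2 * a * c * X ω + c ^ 2 * X ω ^ 2) μ := h_cross.add h_sq
  rw [expand, integral_add (integrable_const _) h_rest, integral_add h_cross h_sq,
    integral_const_mul, integral_const_mul, hX_mean, integral_const, probReal_univ]
  ring

variable {m n : ℕ}

lemma integrable_sq_apply_of_integrable_frobNorm_sq {Γ : Ω → Matrix (Fin m) (Fin n) ℝ}
    (hΓ : ∀ i j, AEStronglyMeasurable (fun ω => Γ ω i j) μ)
    (hΓ_sq : Integrable (fun ω => frobNorm (Γ ω) ^ 2) μ) (i : Fin m) (j : Fin n) :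
    Integrable (fun ω => Γ ω i j ^ 2) μ :=
  hΓ_sq.mono' ((hΓ i j).pow 2) <| .of_forall fun ω => by
    rw [Real.norm_of_nonneg (sq_nonneg _)]
    exact sq_apply_le_frobNorm_sq (Γ ω) i j

lemma integral_frobNorm_add_smul_sq [IsProbabilityMeasure μ]
    {Γ : Ω → Matrix (Fin m) (Fin n) ℝ}
    (hΓ : ∀ i j, Integrable (fun ω => Γ ω i j) μ)
    (hΓ_sq : Integrable (fun ω => frobNorm (Γ ω) ^ 2) μ)
    (hΓ_mean : ∀ i j, ∫ ω, Γ ω i j ∂μ = 0) (A : Matrix (Fin m) (Fin n) ℝ) (c : ℝ) :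
    ∫ ω, frobNorm (A + c • Γ ω) ^ 2 ∂μ
      = frobNorm A ^ 2 + c ^ 2 * ∫ ω, frobNorm (Γ ω) ^ 2 ∂μ := by
  have hΓ_sq_apply :=
    integrable_sq_apply_of_integrable_frobNorm_sq (fun i j => (hΓ i j).aestronglyMeasurable) hΓ_sq
  have h_entry : ∀ i j, Integrable (fun ω => (A i j + c * Γ ω i j) ^ 2) μ := fun i j => by
    refine ((integrable_const (A i j ^ 2)).add (((hΓ i j).const_mul (2 * A i j * c)).add
      ((hΓ_sq_apply i j).const_mul (c ^ 2)))).congr (.of_forall fun ω => ?_)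
    simp only [Pi.add_apply]
    ring
  simp only [frobNorm_sq, Matrix.add_apply, Matrix.smul_apply, smul_eq_mul]
  rw [integral_finsetSum _ fun i _ => integrable_finsetSum _ fun j _ => h_entry i j,
    integral_finsetSum _ fun i _ => integrable_finsetSum _ fun j _ => hΓ_sq_apply i j,
    Finset.mul_sum, ← Finset.sum_add_distrib]
  refine Finset.sum_congr rfl fun i _ => ?_
  rw [integral_finsetSum _ fun j _ => h_entry i j,
    integral_finsetSum _ fun j _ => hΓ_sq_apply i j, Finset.mul_sum, ← Finset.sum_add_distrib]
  exact Finset.sum_congr rfl fun j _ =>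
    integral_add_mul_sq (hΓ i j) (hΓ_sq_apply i j) (hΓ_mean i j) _ _

end Expectation

theorem momentum_error_recursion_general {m n : ℕ}
    {Ω : Type*} [MeasurableSpace Ω] (μ : Measure Ω) [IsProbabilityMeasure μ]
    (θ σ : ℝ) (hθ : θ ∈ Set.Ioo (0 : ℝ) 1)
    (M' Fx Fx' : Matrix (Fin m) (Fin n) ℝ)
    (Γ : Ω → Matrix (Fin m) (Fin n) ℝ)
    (hΓ_int : ∀ i j, Integrable (fun ω => Γ ω i j) μ)
    (hΓ_sq_int : Integrable (fun ω => (frobNorm (Γ ω)) ^ 2) μ)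
    (hΓ_mean : ∀ i j, ∫ ω, Γ ω i j ∂μ = 0)
    (hΓ_var : ∫ ω, (frobNorm (Γ ω)) ^ 2 ∂μ ≤ σ ^ 2)
    (M : Ω → Matrix (Fin m) (Fin n) ℝ)
    (hM : ∀ ω, M ω = θ • M' + (1 - θ) • (Fx + Γ ω)) :
    ∫ ω, (frobNorm (M ω - Fx)) ^ 2 ∂μ
      ≤ θ * (frobNorm (M' - Fx')) ^ 2
        + 1 / (1 - θ) * (frobNorm (Fx - Fx')) ^ 2
        + (1 - θ) ^ 2 * σ ^ 2 := by
  have h_error : ∀ ω, M ω - Fx = θ • ((M' - Fx') - (Fx - Fx')) + (1 - θ) • Γ ω :=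
      fun ω => by
    rw [hM]
    module
  simp only [h_error]
  rw [integral_frobNorm_add_smul_sq hΓ_int hΓ_sq_int hΓ_mean]
  gcongr
  exact frobNorm_smul_sub_sq_le hθ _ _

/-- Momentum error recursion: with `M = θM' + (1−θ)(∇f(X) + Γ)`, `E[Γ] = 0`,
`E[‖Γ‖_F²] ≤ σ²`, we have
`E[‖M − ∇f(X)‖_F²] ≤ θ‖M' − ∇f(X')‖_F² + (1/(1−θ))‖∇f(X) − ∇f(X')‖_F² + (1−θ)²σ²`. -/
theorem momentum_error_recursion {m n : ℕ}
    {Ω : Type*} [MeasurableSpace Ω] (μ : Measure Ω) [IsProbabilityMeasure μ]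
    (θ σ : ℝ) (hθ : θ ∈ Set.Ioo (0 : ℝ) 1) (hσ : 0 ≤ σ)
    (M' Fx Fx' : Matrix (Fin m) (Fin n) ℝ)
    (Γ : Ω → Matrix (Fin m) (Fin n) ℝ)
    (hΓ_int : ∀ i j, Integrable (fun ω => Γ ω i j) μ)
    (hΓ_sq_int : Integrable (fun ω => (frobNorm (Γ ω)) ^ 2) μ)
    (hΓ_mean : ∀ i j, ∫ ω, Γ ω i j ∂μ = 0)
    (hΓ_var : ∫ ω, (frobNorm (Γ ω)) ^ 2 ∂μ ≤ σ ^ 2)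
    (M : Ω → Matrix (Fin m) (Fin n) ℝ)
    (hM : ∀ ω, M ω = θ • M' + (1 - θ) • (Fx + Γ ω)) :
    ∫ ω, (frobNorm (M ω - Fx)) ^ 2 ∂μ
      ≤ θ * (frobNorm (M' - Fx')) ^ 2
        + 1 / (1 - θ) * (frobNorm (Fx - Fx')) ^ 2
        + (1 - θ) ^ 2 * σ ^ 2 :=
  momentum_error_recursion_general μ θ σ hθ M' Fx Fx' Γ hΓ_int hΓ_sq_int hΓ_mean hΓ_var M hM
end

section
/- Let 0 ≤ β < 1, V_0 = 0, and define recursively V_k = β V_{k−1} + (1−β) g_k² for nonnegative reals g_k, and Ṽ_k = β V_{k−1} + (1−β)(h_k² + σ²) where g_k are random with E[g_k² | past] ≤ h_k² + σ² (h_k measurable w.r.t. the past). Then ∑_{k=1}^K E[√(Ṽ_k + ε)] ≤ K√(σ² + ε) + (1+√β) ∑_{t=1}^K E[h_t²/√(Ṽ_t + ε)]. -/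
set_option maxHeartbeats 1000000

open MeasureTheory Finset

private lemma aux_sqrt_split {x a : ℝ} (hx : 0 ≤ x) (ha : 0 ≤ a) :
    Real.sqrt (x + a) ≤ Real.sqrt x + a / Real.sqrt (x + a) := by
  rcases eq_or_lt_of_le (Real.sqrt_nonneg (x + a)) with hs | hs
  · rw [← hs]
    simp only [div_zero, add_zero]
    have : (0:ℝ) ≤ Real.sqrt x := Real.sqrt_nonneg x
    linarith
  · have hxx : Real.sqrt x ^ 2 = x := Real.sq_sqrt hx
    have hss : Real.sqrt (x + a) ^ 2 = x + a := Real.sq_sqrt (by linarith)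
    have hle : Real.sqrt x ≤ Real.sqrt (x + a) := Real.sqrt_le_sqrt (by linarith)
    rw [← sub_le_iff_le_add', le_div_iff₀ hs]
    nlinarith [Real.sqrt_nonneg x]

private lemma aux_sqrt_tangent {u v : ℝ} (hu : 0 ≤ u) (hv : 0 < v) :
    Real.sqrt u ≤ Real.sqrt v + (u - v) / (2 * Real.sqrt v) := by
  have h1 : Real.sqrt u ^ 2 = u := Real.sq_sqrt hu
  have h2 : Real.sqrt v ^ 2 = v := Real.sq_sqrt hv.le
  have hsv : 0 < Real.sqrt v := Real.sqrt_pos.2 hv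
  rw [← sub_le_iff_le_add', le_div_iff₀ (by positivity)]
  nlinarith [sq_nonneg (Real.sqrt u - Real.sqrt v)]

private lemma aux_sqrt_add_le {x y : ℝ} (hx : 0 ≤ x) (hy : 0 ≤ y) :
    Real.sqrt (x + y) ≤ Real.sqrt x + Real.sqrt y := by
  have h : x + y ≤ (Real.sqrt x + Real.sqrt y) ^ 2 := by
    nlinarith [Real.sq_sqrt hx, Real.sq_sqrt hy, Real.sqrt_nonneg x, Real.sqrt_nonneg y]
  calc Real.sqrt (x + y) ≤ Real.sqrt ((Real.sqrt x + Real.sqrt y) ^ 2) := Real.sqrt_le_sqrt h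
    _ = Real.sqrt x + Real.sqrt y := Real.sqrt_sq (by positivity)

private lemma aux_sqrt_le_one_add {x : ℝ} (hx : 0 ≤ x) : Real.sqrt x ≤ 1 + x := by
  nlinarith [Real.sq_sqrt hx, Real.sqrt_nonneg x, sq_nonneg (Real.sqrt x - 1)]

private lemma aux_sqrt_pow {b : ℝ} (hb : 0 ≤ b) (n : ℕ) :
    Real.sqrt (b ^ n) = Real.sqrt b ^ n := by
  induction n with
  | zero => simp
  | succ m ih => rw [pow_succ, pow_succ, Real.sqrt_mul (pow_nonneg hb m), ih]

private lemma aux_geom {r : ℝ} (h0 : 0 ≤ r) (h1 : r < 1) (N : ℕ) :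
    ∑ i ∈ Finset.range N, r ^ i ≤ 1 / (1 - r) := by
  rw [geom_sum_eq (by linarith : r ≠ 1)]
  have e : (r ^ N - 1) / (r - 1) = (1 - r ^ N) / (1 - r) := by
    rw [← neg_div_neg_eq]; ring_nf
  rw [e]
  exact (div_le_div_iff_of_pos_right (by linarith)).2 (by nlinarith [pow_nonneg h0 N])

/-- abstract conditional-expectation step:
`∫ √(a + c·x) ≤ ∫ √(a + c·y)` when `E[x|m] ≤ y` a.e. -/
private lemma step_cond {Ω : Type*} {m0 : MeasurableSpace Ω} (μ : Measure Ω)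
    [IsProbabilityMeasure μ]
    {m : MeasurableSpace Ω} (hm : m ≤ m0)
    (a x y : Ω → ℝ) (c ε : ℝ) (hc : 0 ≤ c) (hε : 0 < ε)
    (ha_meas : StronglyMeasurable[m] a) (hy_meas : StronglyMeasurable[m] y)
    (ha : ∀ ω, ε ≤ a ω) (hy : ∀ ω, 0 ≤ y ω) (hx : ∀ ω, 0 ≤ x ω)
    (hx_int : Integrable x μ)
    (hcond : ∀ᵐ ω ∂μ, (μ[x|m]) ω ≤ y ω)
    (h_int_sqrt : Integrable (fun ω => Real.sqrt (a ω + c * y ω)) μ)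
    (h_int_wy : Integrable (fun ω => c / (2 * Real.sqrt (a ω + c * y ω)) * y ω) μ) :
    ∫ ω, Real.sqrt (a ω + c * x ω) ∂μ ≤ ∫ ω, Real.sqrt (a ω + c * y ω) ∂μ := by
  have hv_pos : ∀ ω, 0 < a ω + c * y ω := fun ω => by nlinarith [ha ω, hy ω]
  have hw_nonneg : ∀ ω, 0 ≤ c / (2 * Real.sqrt (a ω + c * y ω)) :=
    fun ω => div_nonneg hc (by positivity)
  have hw_bdd : ∀ ω, ‖c / (2 * Real.sqrt (a ω + c * y ω))‖ ≤ c / (2 * Real.sqrt ε) := by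
    intro ω
    rw [Real.norm_eq_abs, abs_of_nonneg (hw_nonneg ω)]
    have h1 : Real.sqrt ε ≤ Real.sqrt (a ω + c * y ω) :=
      Real.sqrt_le_sqrt (by nlinarith [ha ω, hy ω])
    exact div_le_div_of_nonneg_left hc (by positivity) (by linarith)
  have hw_meas : StronglyMeasurable[m]
      (fun ω => c / (2 * Real.sqrt (a ω + c * y ω))) := by
    apply Measurable.stronglyMeasurable
    exact Measurable.div measurable_const
      (((ha_meas.measurable.add (hy_meas.measurable.const_mul c)).sqrt).const_mul 2)
  have hwm0 : @AEStronglyMeasurable Ω ℝ _ m0 m0 (fun ω => c / (2 * Real.sqrt (a ω + c * y ω))) μ :=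
    (hw_meas.mono hm).aestronglyMeasurable
  have hwx_int : Integrable (fun ω => c / (2 * Real.sqrt (a ω + c * y ω)) * x ω) μ :=
    hx_int.bdd_mul hwm0 (ae_of_all _ hw_bdd)
  have hmul : μ[(fun ω => c / (2 * Real.sqrt (a ω + c * y ω))) * x|m]
      =ᵐ[μ] (fun ω => c / (2 * Real.sqrt (a ω + c * y ω))) * μ[x|m] :=
    condExp_mul_of_stronglyMeasurable_left hw_meas (by exact hwx_int) hx_int
  haveI : SigmaFinite (μ.trim hm) := by infer_instance
  have hint_wcx : Integrable
      (fun ω => c / (2 * Real.sqrt (a ω + c * y ω)) * (μ[x|m]) ω) μ :=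
    integrable_condExp.bdd_mul hwm0 (ae_of_all _ hw_bdd)
  have key : ∫ ω, c / (2 * Real.sqrt (a ω + c * y ω)) * x ω ∂μ
      ≤ ∫ ω, c / (2 * Real.sqrt (a ω + c * y ω)) * y ω ∂μ := by
    have h1 : ∫ ω, c / (2 * Real.sqrt (a ω + c * y ω)) * x ω ∂μ
        = ∫ ω, c / (2 * Real.sqrt (a ω + c * y ω)) * (μ[x|m]) ω ∂μ := by
      calc ∫ ω, c / (2 * Real.sqrt (a ω + c * y ω)) * x ω ∂μ
          = ∫ ω, (μ[(fun ω => c / (2 * Real.sqrt (a ω + c * y ω))) * x|m]) ω ∂μ :=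
            (integral_condExp hm).symm
        _ = ∫ ω, c / (2 * Real.sqrt (a ω + c * y ω)) * (μ[x|m]) ω ∂μ :=
            integral_congr_ae hmul
    rw [h1]
    refine integral_mono_ae hint_wcx h_int_wy ?_
    filter_upwards [hcond] with ω hω
    exact mul_le_mul_of_nonneg_left hω (hw_nonneg ω)
  have ptw : ∀ ω, Real.sqrt (a ω + c * x ω)
      ≤ Real.sqrt (a ω + c * y ω)
        + (c / (2 * Real.sqrt (a ω + c * y ω)) * x ω
            - c / (2 * Real.sqrt (a ω + c * y ω)) * y ω) := by
    intro ω
    have h1 := aux_sqrt_tangent (u := a ω + c * x ω) (v := a ω + c * y ω)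
      (by nlinarith [ha ω, hx ω]) (hv_pos ω)
    have hs : 0 < Real.sqrt (a ω + c * y ω) := Real.sqrt_pos.2 (hv_pos ω)
    have h2 : (a ω + c * x ω - (a ω + c * y ω)) / (2 * Real.sqrt (a ω + c * y ω))
        = c / (2 * Real.sqrt (a ω + c * y ω)) * x ω
          - c / (2 * Real.sqrt (a ω + c * y ω)) * y ω := by
      field_simp
      try ring
    rw [h2] at h1
    exact h1
  have hint_sub : Integrable (fun ω =>
      c / (2 * Real.sqrt (a ω + c * y ω)) * x ω
        - c / (2 * Real.sqrt (a ω + c * y ω)) * y ω) μ := hwx_int.sub h_int_wy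
  calc ∫ ω, Real.sqrt (a ω + c * x ω) ∂μ
      ≤ ∫ ω, (Real.sqrt (a ω + c * y ω)
          + (c / (2 * Real.sqrt (a ω + c * y ω)) * x ω
              - c / (2 * Real.sqrt (a ω + c * y ω)) * y ω)) ∂μ :=
        integral_mono_of_nonneg (ae_of_all _ fun ω => Real.sqrt_nonneg _)
          (h_int_sqrt.add hint_sub) (ae_of_all _ ptw)
    _ = ∫ ω, Real.sqrt (a ω + c * y ω) ∂μ
        + (∫ ω, c / (2 * Real.sqrt (a ω + c * y ω)) * x ω ∂μ
            - ∫ ω, c / (2 * Real.sqrt (a ω + c * y ω)) * y ω ∂μ) := by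
        rw [integral_add h_int_sqrt hint_sub, integral_sub hwx_int h_int_wy]
    _ ≤ ∫ ω, Real.sqrt (a ω + c * y ω) ∂μ := by linarith [key]

/-- Second-moment lemma: let `0 ≤ β < 1`, `V_0 = 0`, `V_k = βV_{k−1} + (1−β)g_k²`,
`Ṽ_k = βV_{k−1} + (1−β)(h_k² + σ²)`, with `h_k` measurable w.r.t. the past and
`E[g_k² | F_{k−1}] ≤ h_k² + σ²`. Then
`∑_{k=1}^K E[√(Ṽ_k+ε)] ≤ K√(σ²+ε) + (1+√β)∑_{t=1}^K E[h_t²/√(Ṽ_t+ε)]`. -/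
theorem second_moment_lemma
    {Ω : Type*} {m0 : MeasurableSpace Ω} (μ : Measure Ω) [IsProbabilityMeasure μ]
    (ℱ : Filtration ℕ m0)
    (β σ ε : ℝ) (hβ0 : 0 ≤ β) (hβ1 : β < 1) (hσ : 0 ≤ σ) (hε : 0 < ε)
    (g h : ℕ → Ω → ℝ) (V Vt : ℕ → Ω → ℝ)
    (hV0 : ∀ ω, V 0 ω = 0)
    (hV : ∀ k, 1 ≤ k → ∀ ω, V k ω = β * V (k - 1) ω + (1 - β) * (g k ω) ^ 2)
    (hVt : ∀ k, 1 ≤ k → ∀ ω, Vt k ω = β * V (k - 1) ω + (1 - β) * ((h k ω) ^ 2 + σ ^ 2))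
    (hg_adapted : ∀ k, StronglyMeasurable[ℱ k] (g k))
    (hg_int : ∀ k, Integrable (fun ω => (g k ω) ^ 2) μ)
    (hh_meas : ∀ k, 1 ≤ k → StronglyMeasurable[ℱ (k - 1)] (h k))
    (hcond : ∀ k, 1 ≤ k →
      ∀ᵐ ω ∂μ, (μ[(fun ω' => (g k ω') ^ 2) | ℱ (k - 1)]) ω ≤ (h k ω) ^ 2 + σ ^ 2)
    (K : ℕ)
    (hint1 : ∀ k, Integrable (fun ω => Real.sqrt (Vt k ω + ε)) μ)
    (hint2 : ∀ k, Integrable (fun ω => (h k ω) ^ 2 / Real.sqrt (Vt k ω + ε)) μ) :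
    ∑ k ∈ Finset.Icc 1 K, ∫ ω, Real.sqrt (Vt k ω + ε) ∂μ
      ≤ (K : ℝ) * Real.sqrt (σ ^ 2 + ε)
        + (1 + Real.sqrt β) * ∑ t ∈ Finset.Icc 1 K,
            ∫ ω, (h t ω) ^ 2 / Real.sqrt (Vt t ω + ε) ∂μ := by
  have hβ1' : (0:ℝ) ≤ 1 - β := by linarith
  have hpow_le_one : ∀ n : ℕ, β ^ n ≤ 1 := fun n => pow_le_one₀ hβ0 hβ1.le
  have hpow_nonneg : ∀ n : ℕ, 0 ≤ β ^ n := fun n => pow_nonneg hβ0 n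
  -- nonnegativity of V
  have hVnn : ∀ k, ∀ ω, 0 ≤ V k ω := by
    intro k
    induction k with
    | zero => intro ω; rw [hV0 ω]
    | succ n ih =>
        intro ω
        rw [hV (n+1) (by omega) ω]
        simp only [Nat.add_sub_cancel]
        nlinarith [ih ω, sq_nonneg (g (n+1) ω)]
  -- measurability of V
  have hVmeas : ∀ k, StronglyMeasurable[ℱ k] (V k) := by
    intro k
    induction k with
    | zero =>
        have e : V 0 = fun _ => (0:ℝ) := funext hV0
        rw [e]; exact stronglyMeasurable_const
    | succ n ih =>
        have e : V (n+1) = fun ω => β * V n ω + (1-β) * (g (n+1) ω)^2 := by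
          funext ω; rw [hV (n+1) (by omega) ω]; simp
        rw [e]
        apply Measurable.stronglyMeasurable
        exact (((ih.mono (ℱ.mono (Nat.le_succ n))).measurable.const_mul β).add
          ((((hg_adapted (n+1)).measurable.pow_const 2)).const_mul (1-β)))
  have hVm0 : ∀ k, Measurable (V k) := fun k => ((hVmeas k).mono (ℱ.le k)).measurable
  -- integrability of V
  have hVint : ∀ k, Integrable (V k) μ := by
    intro k
    induction k with
    | zero =>
        have e : V 0 = fun _ => (0:ℝ) := funext hV0
        rw [e]; exact integrable_const 0
    | succ n ih =>
        have e : V (n+1) = fun ω => β * V n ω + (1-β) * (g (n+1) ω)^2 := by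
          funext ω; rw [hV (n+1) (by omega) ω]; simp
        rw [e]
        exact (ih.const_mul β).add ((hg_int (n+1)).const_mul (1-β))
  -- positivity of Vt + ε
  have hVtnn : ∀ k, 1 ≤ k → ∀ ω, 0 ≤ Vt k ω := by
    intro k hk ω
    rw [hVt k hk ω]
    nlinarith [hVnn (k-1) ω, sq_nonneg (h k ω), sq_nonneg σ]
  have hVtpos : ∀ k, 1 ≤ k → ∀ ω, 0 < Vt k ω + ε :=
    fun k hk ω => by linarith [hVtnn k hk ω]
  -- nonnegativity of the b-integrals
  have hBnn : ∀ t, 0 ≤ ∫ ω, (h t ω) ^ 2 / Real.sqrt (Vt t ω + ε) ∂μ := by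
    intro t
    apply integral_nonneg
    intro ω
    exact div_nonneg (sq_nonneg _) (Real.sqrt_nonneg _)
  -- lower bound for the G-expression
  have hGlb : ∀ j, 1 ≤ j → ∀ p : ℕ, ∀ ω,
      β^p * (Vt j ω + ε)
        ≤ β^(p+1) * V (j-1) ω + β^p*(1-β)*((h j ω)^2 + σ^2) + (σ^2*(1-β^p) + ε) := by
    intro j hj p ω
    rw [hVt j hj ω, pow_succ β p]
    nlinarith [mul_nonneg (sq_nonneg σ) (by linarith [hpow_le_one p] : (0:ℝ) ≤ 1 - β^p),
      mul_nonneg (by linarith [hpow_le_one p] : (0:ℝ) ≤ 1 - β^p) hε.le,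
      hε.le, hpow_le_one p, hpow_nonneg p]
  -- upper bound for the G-expression
  have hGub : ∀ j, 1 ≤ j → ∀ p : ℕ, ∀ ω,
      β^(p+1) * V (j-1) ω + β^p*(1-β)*((h j ω)^2 + σ^2) + (σ^2*(1-β^p) + ε)
        ≤ (Vt j ω + ε) + (σ^2 + ε) := by
    intro j hj p ω
    rw [hVt j hj ω, pow_succ β p]
    nlinarith [mul_nonneg (mul_nonneg (by linarith [hpow_le_one p] : (0:ℝ) ≤ 1 - β^p) hβ0)
        (hVnn (j-1) ω),
      mul_nonneg (mul_nonneg (by linarith [hpow_le_one p] : (0:ℝ) ≤ 1 - β^p) hβ1')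
        (by nlinarith [sq_nonneg (h j ω), sq_nonneg σ] : (0:ℝ) ≤ (h j ω)^2 + σ^2),
      mul_nonneg (hpow_nonneg p) (sq_nonneg σ), hε.le, hpow_le_one p, hpow_nonneg p]
  -- nonnegativity of the G-expression pieces
  have hGnn : ∀ j, 1 ≤ j → ∀ p : ℕ, ∀ ω,
      (0:ℝ) ≤ β^(p+1) * V (j-1) ω + (σ^2*(1-β^(p+1)) + ε) := by
    intro j hj p ω
    nlinarith [mul_nonneg (hpow_nonneg (p+1)) (hVnn (j-1) ω),
      mul_nonneg (sq_nonneg σ) (by linarith [hpow_le_one (p+1)] : (0:ℝ) ≤ 1 - β^(p+1)), hε.le]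
  -- integrability of √(G-expression)
  have hGint : ∀ j, 1 ≤ j → ∀ p : ℕ,
      Integrable (fun ω => Real.sqrt (β^(p+1) * V (j-1) ω
        + β^p*(1-β)*((h j ω)^2 + σ^2) + (σ^2*(1-β^p) + ε))) μ := by
    intro j hj p
    apply Integrable.mono' (g := fun ω => Real.sqrt (Vt j ω + ε) + Real.sqrt (σ^2 + ε))
    · exact (hint1 j).add (integrable_const _)
    · apply Measurable.aestronglyMeasurable
      apply Measurable.sqrt
      exact ((((hVm0 (j-1)).const_mul _).add
        (((((hh_meas j hj).mono (ℱ.le _)).measurable.pow_const 2).add_const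
          (σ^2)).const_mul _)).add_const _)
    · refine ae_of_all _ fun ω => ?_
      rw [Real.norm_eq_abs, abs_of_nonneg (Real.sqrt_nonneg _)]
      calc Real.sqrt (β^(p+1) * V (j-1) ω + β^p*(1-β)*((h j ω)^2 + σ^2) + (σ^2*(1-β^p) + ε))
          ≤ Real.sqrt ((Vt j ω + ε) + (σ^2 + ε)) := Real.sqrt_le_sqrt (hGub j hj p ω)
        _ ≤ Real.sqrt (Vt j ω + ε) + Real.sqrt (σ^2 + ε) :=
            aux_sqrt_add_le (hVtpos j hj ω).le (by positivity)
  -- integrability of √(H-expression)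
  have hHint : ∀ j p : ℕ,
      Integrable (fun ω => Real.sqrt (β^(p+1) * V j ω + (σ^2*(1-β^(p+1)) + ε))) μ := by
    intro j p
    apply Integrable.mono'
      (g := fun ω => 1 + (β^(p+1) * V j ω + (σ^2*(1-β^(p+1)) + ε)))
    · exact (integrable_const 1).add (((hVint j).const_mul _).add (integrable_const _))
    · exact ((((hVm0 j).const_mul _).add_const _).sqrt).aestronglyMeasurable
    · refine ae_of_all _ fun ω => ?_
      rw [Real.norm_eq_abs, abs_of_nonneg (Real.sqrt_nonneg _)]
      apply aux_sqrt_le_one_add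
      nlinarith [mul_nonneg (hpow_nonneg (p+1)) (hVnn j ω),
        mul_nonneg (sq_nonneg σ) (by linarith [hpow_le_one (p+1)] : (0:ℝ) ≤ 1 - β^(p+1)),
        hε.le]
  -- SPLIT step
  have SPLIT : ∀ j, 1 ≤ j → ∀ p : ℕ,
      ∫ ω, Real.sqrt (β^(p+1) * V (j-1) ω + β^p*(1-β)*((h j ω)^2 + σ^2)
          + (σ^2*(1-β^p) + ε)) ∂μ
        ≤ ∫ ω, Real.sqrt (β^(p+1) * V (j-1) ω + (σ^2*(1-β^(p+1)) + ε)) ∂μ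
          + (1-β) * (Real.sqrt β)^p
            * ∫ ω, (h j ω)^2 / Real.sqrt (Vt j ω + ε) ∂μ := by
    intro j hj p
    have ptw : ∀ ω, Real.sqrt (β^(p+1) * V (j-1) ω + β^p*(1-β)*((h j ω)^2 + σ^2)
          + (σ^2*(1-β^p) + ε))
        ≤ Real.sqrt (β^(p+1) * V (j-1) ω + (σ^2*(1-β^(p+1)) + ε))
          + (1-β) * (Real.sqrt β)^p * ((h j ω)^2 / Real.sqrt (Vt j ω + ε)) := by
      intro ω
      have key0 : β^(p+1) * V (j-1) ω + (σ^2*(1-β^(p+1)) + ε) + β^p*(1-β)*(h j ω)^2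
          = β^(p+1) * V (j-1) ω + β^p*(1-β)*((h j ω)^2 + σ^2) + (σ^2*(1-β^p) + ε) := by
        ring
      rcases eq_or_lt_of_le (hpow_nonneg p) with h0 | h0
      · have hb1 : β^(p+1) = 0 := by rw [pow_succ, ← h0]; ring
        have e : β^(p+1) * V (j-1) ω + β^p*(1-β)*((h j ω)^2 + σ^2) + (σ^2*(1-β^p) + ε)
            = β^(p+1) * V (j-1) ω + (σ^2*(1-β^(p+1)) + ε) := by
          rw [hb1, ← h0]; ring
        rw [e]
        have hge : (0:ℝ) ≤ (1-β) * (Real.sqrt β)^p * ((h j ω)^2 / Real.sqrt (Vt j ω + ε)) := by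
          apply mul_nonneg (mul_nonneg hβ1' (pow_nonneg (Real.sqrt_nonneg β) p))
          exact div_nonneg (sq_nonneg _) (Real.sqrt_nonneg _)
        linarith
      · have hx0 : (0:ℝ) ≤ β^(p+1) * V (j-1) ω + (σ^2*(1-β^(p+1)) + ε) := hGnn j hj p ω
        have ha0 : (0:ℝ) ≤ β^p*(1-β)*(h j ω)^2 :=
          mul_nonneg (mul_nonneg (hpow_nonneg p) hβ1') (sq_nonneg _)
        have h1 := aux_sqrt_split hx0 ha0
        rw [key0] at h1
        have hsbp : (0:ℝ) < (Real.sqrt β)^p := by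
          rw [← aux_sqrt_pow hβ0 p]
          exact Real.sqrt_pos.2 h0
        have hsbp2 : ((Real.sqrt β)^p)^2 = β^p := by
          rw [← aux_sqrt_pow hβ0 p]
          exact Real.sq_sqrt (hpow_nonneg p)
        have hVt_pos : 0 < Vt j ω + ε := hVtpos j hj ω
        have hd_pos : 0 < (Real.sqrt β)^p * Real.sqrt (Vt j ω + ε) :=
          mul_pos hsbp (Real.sqrt_pos.2 hVt_pos)
        have hsqrtG_ge : (Real.sqrt β)^p * Real.sqrt (Vt j ω + ε)
            ≤ Real.sqrt (β^(p+1) * V (j-1) ω + β^p*(1-β)*((h j ω)^2 + σ^2)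
                + (σ^2*(1-β^p) + ε)) := by
          have e2 : (Real.sqrt β)^p * Real.sqrt (Vt j ω + ε)
              = Real.sqrt (β^p * (Vt j ω + ε)) := by
            rw [Real.sqrt_mul (hpow_nonneg p), aux_sqrt_pow hβ0 p]
          rw [e2]
          exact Real.sqrt_le_sqrt (hGlb j hj p ω)
        have hterm : β^p*(1-β)*(h j ω)^2
              / Real.sqrt (β^(p+1) * V (j-1) ω + β^p*(1-β)*((h j ω)^2 + σ^2)
                  + (σ^2*(1-β^p) + ε))
            ≤ (1-β) * (Real.sqrt β)^p * ((h j ω)^2 / Real.sqrt (Vt j ω + ε)) := by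
          calc β^p*(1-β)*(h j ω)^2
              / Real.sqrt (β^(p+1) * V (j-1) ω + β^p*(1-β)*((h j ω)^2 + σ^2)
                  + (σ^2*(1-β^p) + ε))
              ≤ β^p*(1-β)*(h j ω)^2 / ((Real.sqrt β)^p * Real.sqrt (Vt j ω + ε)) := by
                exact div_le_div_of_nonneg_left ha0 hd_pos hsqrtG_ge
            _ = (1-β) * (Real.sqrt β)^p * ((h j ω)^2 / Real.sqrt (Vt j ω + ε)) := by
                rw [← hsbp2]
                field_simp
        linarith
    calc ∫ ω, Real.sqrt (β^(p+1) * V (j-1) ω + β^p*(1-β)*((h j ω)^2 + σ^2)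
            + (σ^2*(1-β^p) + ε)) ∂μ
        ≤ ∫ ω, (Real.sqrt (β^(p+1) * V (j-1) ω + (σ^2*(1-β^(p+1)) + ε))
            + (1-β) * (Real.sqrt β)^p * ((h j ω)^2 / Real.sqrt (Vt j ω + ε))) ∂μ := by
          apply integral_mono_of_nonneg (ae_of_all _ fun ω => Real.sqrt_nonneg _)
            ((hHint (j-1) p).add ((hint2 j).const_mul _)) (ae_of_all _ ptw)
      _ = ∫ ω, Real.sqrt (β^(p+1) * V (j-1) ω + (σ^2*(1-β^(p+1)) + ε)) ∂μ
          + (1-β) * (Real.sqrt β)^p * ∫ ω, (h j ω)^2 / Real.sqrt (Vt j ω + ε) ∂μ := by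
          rw [integral_add (hHint (j-1) p) ((hint2 j).const_mul _), MeasureTheory.integral_const_mul]

  -- COND step
  have COND : ∀ i, 1 ≤ i → ∀ p : ℕ,
      ∫ ω, Real.sqrt (β^(p+1) * V i ω + (σ^2*(1-β^(p+1)) + ε)) ∂μ
        ≤ ∫ ω, Real.sqrt (β^(p+1+1) * V (i-1) ω + β^(p+1)*(1-β)*((h i ω)^2 + σ^2)
            + (σ^2*(1-β^(p+1)) + ε)) ∂μ := by
    intro i hi p
    have hm : ℱ (i-1) ≤ m0 := ℱ.le _
    set a : Ω → ℝ := fun ω => β^(p+1+1) * V (i-1) ω + (σ^2*(1-β^(p+1)) + ε) with ha_def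
    set y : Ω → ℝ := fun ω => (h i ω)^2 + σ^2 with hy_def
    have eL : (fun ω => Real.sqrt (β^(p+1) * V i ω + (σ^2*(1-β^(p+1)) + ε)))
        = fun ω => Real.sqrt (a ω + β^(p+1)*(1-β) * (g i ω)^2) := by
      funext ω; simp only [ha_def]; congr 1; rw [hV i hi ω]; ring
    have eR : (fun ω => Real.sqrt (β^(p+1+1) * V (i-1) ω + β^(p+1)*(1-β)*((h i ω)^2 + σ^2)
            + (σ^2*(1-β^(p+1)) + ε)))
        = fun ω => Real.sqrt (a ω + β^(p+1)*(1-β) * y ω) := by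
      funext ω; simp only [ha_def, hy_def]; congr 1; ring
    rw [eL, eR]
    have ha_meas : StronglyMeasurable[ℱ (i-1)] a := by
      apply Measurable.stronglyMeasurable
      exact ((hVmeas (i-1)).measurable.const_mul _).add_const _
    have hy_meas : StronglyMeasurable[ℱ (i-1)] y := by
      apply Measurable.stronglyMeasurable
      exact ((hh_meas i hi).measurable.pow_const 2).add_const _
    have hc : (0:ℝ) ≤ β^(p+1)*(1-β) := mul_nonneg (hpow_nonneg (p+1)) hβ1'
    have ha_lb : ∀ ω, ε ≤ a ω := by
      intro ω
      simp only [ha_def]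
      nlinarith [mul_nonneg (hpow_nonneg (p+1+1)) (hVnn (i-1) ω),
        mul_nonneg (sq_nonneg σ)
          (by linarith [hpow_le_one (p+1)] : (0:ℝ) ≤ 1 - β^(p+1))]
    have hy_nn : ∀ ω, 0 ≤ y ω := fun ω => by
      simp only [hy_def]; positivity
    have hx_nn : ∀ ω, (0:ℝ) ≤ (g i ω)^2 := fun ω => sq_nonneg _
    -- the key identity: a + c·y = G (p+1) i
    have hacy : ∀ ω, a ω + β^(p+1)*(1-β) * y ω
        = β^(p+1+1) * V (i-1) ω + β^(p+1)*(1-β)*((h i ω)^2 + σ^2)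
          + (σ^2*(1-β^(p+1)) + ε) := by
      intro ω; simp only [ha_def, hy_def]; ring
    have h_int_sqrt : Integrable (fun ω => Real.sqrt (a ω + β^(p+1)*(1-β) * y ω)) μ := by
      have := hGint i hi (p+1)
      refine this.congr (ae_of_all _ fun ω => ?_)
      show Real.sqrt _ = Real.sqrt (a ω + β^(p+1)*(1-β) * y ω)
      rw [hacy ω]
    have h_int_wy : Integrable (fun ω =>
        β^(p+1)*(1-β) / (2 * Real.sqrt (a ω + β^(p+1)*(1-β) * y ω)) * y ω) μ := by
      rcases eq_or_lt_of_le (hpow_nonneg (p+1)) with h0 | h0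
      · have e : (fun ω =>
            β^(p+1)*(1-β) / (2 * Real.sqrt (a ω + β^(p+1)*(1-β) * y ω)) * y ω)
            = fun _ => (0:ℝ) := by
          funext ω; rw [← h0]; simp
        rw [e]; exact integrable_const 0
      · have hsbq : (0:ℝ) < (Real.sqrt β)^(p+1) := by
          rw [← aux_sqrt_pow hβ0 (p+1)]
          exact Real.sqrt_pos.2 h0
        set C1 : ℝ := β^(p+1)*(1-β) / (2 * (Real.sqrt β)^(p+1)) with hC1
        have hC1nn : 0 ≤ C1 := div_nonneg hc (by positivity)
        apply Integrable.mono'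
          (g := fun ω => C1 * ((h i ω)^2 / Real.sqrt (Vt i ω + ε)) + C1 * (σ^2 / Real.sqrt ε))
        · exact ((hint2 i).const_mul C1).add (integrable_const _)
        · apply Measurable.aestronglyMeasurable
          apply Measurable.mul
          · apply Measurable.div measurable_const
            apply Measurable.const_mul
            apply Measurable.sqrt
            exact (((hVm0 (i-1)).const_mul _).add_const _).add
              ((((((hh_meas i hi).mono hm).measurable.pow_const 2).add_const
                (σ^2)).const_mul _))
          · exact (((hh_meas i hi).mono hm).measurable.pow_const 2).add_const _
        · refine ae_of_all _ fun ω => ?_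
          have hvpos : 0 < a ω + β^(p+1)*(1-β) * y ω := by
            have h1 := ha_lb ω
            have h2 := hy_nn ω
            nlinarith
          have hwnn : 0 ≤ β^(p+1)*(1-β) / (2 * Real.sqrt (a ω + β^(p+1)*(1-β) * y ω)) * y ω := by
            apply mul_nonneg (div_nonneg hc (by positivity)) (hy_nn ω)
          rw [Real.norm_eq_abs, abs_of_nonneg hwnn]
          -- denominator lower bound
          have hVt_pos : 0 < Vt i ω + ε := hVtpos i hi ω
          have hdl : (Real.sqrt β)^(p+1) * Real.sqrt (Vt i ω + ε)
              ≤ Real.sqrt (a ω + β^(p+1)*(1-β) * y ω) := by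
            rw [hacy ω]
            have e2 : (Real.sqrt β)^(p+1) * Real.sqrt (Vt i ω + ε)
                = Real.sqrt (β^(p+1) * (Vt i ω + ε)) := by
              rw [Real.sqrt_mul (hpow_nonneg (p+1)), aux_sqrt_pow hβ0 (p+1)]
            rw [e2]
            exact Real.sqrt_le_sqrt (hGlb i hi (p+1) ω)
          have hdpos : 0 < (Real.sqrt β)^(p+1) * Real.sqrt (Vt i ω + ε) :=
            mul_pos hsbq (Real.sqrt_pos.2 hVt_pos)
          have step1 : β^(p+1)*(1-β) / (2 * Real.sqrt (a ω + β^(p+1)*(1-β) * y ω)) * y ω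
              ≤ β^(p+1)*(1-β) / (2 * ((Real.sqrt β)^(p+1) * Real.sqrt (Vt i ω + ε))) * y ω := by
            apply mul_le_mul_of_nonneg_right _ (hy_nn ω)
            apply div_le_div_of_nonneg_left hc (by positivity)
            linarith
          refine step1.trans ?_
          have hsbq2 : ((Real.sqrt β)^(p+1))^2 = β^(p+1) := by
            rw [← aux_sqrt_pow hβ0 (p+1)]
            exact Real.sq_sqrt (hpow_nonneg (p+1))
          have e3 : β^(p+1)*(1-β) / (2 * ((Real.sqrt β)^(p+1) * Real.sqrt (Vt i ω + ε))) * y ω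
              = C1 * ((h i ω)^2 / Real.sqrt (Vt i ω + ε)) + C1 * (σ^2 / Real.sqrt (Vt i ω + ε)) := by
            simp only [hC1, hy_def]
            field_simp
          rw [e3]
          have : C1 * (σ^2 / Real.sqrt (Vt i ω + ε)) ≤ C1 * (σ^2 / Real.sqrt ε) := by
            apply mul_le_mul_of_nonneg_left _ hC1nn
            apply div_le_div_of_nonneg_left (sq_nonneg σ) (Real.sqrt_pos.2 hε)
            exact Real.sqrt_le_sqrt (by linarith [hVtnn i hi ω])
          linarith
    exact step_cond μ hm a (fun ω => (g i ω)^2) y (β^(p+1)*(1-β)) ε hc hε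
      ha_meas hy_meas ha_lb hy_nn hx_nn (hg_int i) (hcond i hi) h_int_sqrt h_int_wy
  -- KEY inequality by induction
  have KEY : ∀ j, 1 ≤ j → ∀ p : ℕ,
      ∫ ω, Real.sqrt (β^(p+1) * V (j-1) ω + β^p*(1-β)*((h j ω)^2 + σ^2)
          + (σ^2*(1-β^p) + ε)) ∂μ
        ≤ Real.sqrt (σ^2 + ε)
          + (1-β) * ∑ t ∈ Finset.Icc 1 j, (Real.sqrt β)^(p + j - t)
              * ∫ ω, (h t ω)^2 / Real.sqrt (Vt t ω + ε) ∂μ := by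
    intro j hj
    induction j, hj using Nat.le_induction with
    | base =>
        intro p
        have hs := SPLIT 1 le_rfl p
        have e0 : (fun ω => Real.sqrt (β^(p+1) * V (1-1) ω + (σ^2*(1-β^(p+1)) + ε)))
            = fun _ => Real.sqrt (σ^2*(1-β^(p+1)) + ε) := by
          funext ω
          have e1 : V (1-1) ω = 0 := hV0 ω
          rw [e1, mul_zero, zero_add]
        rw [e0, integral_const] at hs
        simp only [measure_univ, probReal_univ, ENNReal.toReal_one, smul_eq_mul, one_mul] at hs
        have hmono : Real.sqrt (σ^2*(1-β^(p+1)) + ε) ≤ Real.sqrt (σ^2 + ε) :=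
          Real.sqrt_le_sqrt (by nlinarith [hpow_nonneg (p+1), sq_nonneg σ])
        have esum : ∑ t ∈ Finset.Icc 1 1, (Real.sqrt β)^(p + 1 - t)
              * ∫ ω, (h t ω)^2 / Real.sqrt (Vt t ω + ε) ∂μ
            = (Real.sqrt β)^p * ∫ ω, (h 1 ω)^2 / Real.sqrt (Vt 1 ω + ε) ∂μ := by
          rw [Finset.Icc_self, Finset.sum_singleton,
            show p + 1 - 1 = p from rfl]
        rw [esum]
        calc ∫ ω, Real.sqrt (β^(p+1) * V (1-1) ω + β^p*(1-β)*((h 1 ω)^2 + σ^2)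
              + (σ^2*(1-β^p) + ε)) ∂μ
            ≤ Real.sqrt (σ^2*(1-β^(p+1)) + ε)
              + (1-β) * (Real.sqrt β)^p * ∫ ω, (h 1 ω)^2 / Real.sqrt (Vt 1 ω + ε) ∂μ := hs
          _ ≤ Real.sqrt (σ^2 + ε)
              + (1-β) * ((Real.sqrt β)^p * ∫ ω, (h 1 ω)^2 / Real.sqrt (Vt 1 ω + ε) ∂μ) := by
            rw [← mul_assoc]
            linarith
    | succ j hj ih =>
        intro p
        have h1 := SPLIT (j+1) (by omega) p
        simp only [Nat.add_sub_cancel] at h1 ⊢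
        have h2 := COND j hj p
        have h3 := ih (p+1)
        have esum : ∑ t ∈ Finset.Icc 1 (j+1), (Real.sqrt β)^(p + (j+1) - t)
              * ∫ ω, (h t ω)^2 / Real.sqrt (Vt t ω + ε) ∂μ
            = (∑ t ∈ Finset.Icc 1 j, (Real.sqrt β)^(p + 1 + j - t)
                * ∫ ω, (h t ω)^2 / Real.sqrt (Vt t ω + ε) ∂μ)
              + (Real.sqrt β)^p * ∫ ω, (h (j+1) ω)^2 / Real.sqrt (Vt (j+1) ω + ε) ∂μ := by
          rw [Finset.sum_Icc_succ_top (by omega : 1 ≤ j+1),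
            show p + (j+1) - (j+1) = p from by omega]
          congr 1
          refine Finset.sum_congr rfl fun t ht => ?_
          have ht' := Finset.mem_Icc.1 ht
          rw [show p + (j+1) - t = p + 1 + j - t from by omega]
        rw [esum]
        have := le_trans h1 (by linarith [h2, h3] :
          (∫ ω, Real.sqrt (β^(p+1) * V j ω + (σ^2*(1-β^(p+1)) + ε)) ∂μ)
            + (1-β) * (Real.sqrt β)^p * ∫ ω, (h (j+1) ω)^2 / Real.sqrt (Vt (j+1) ω + ε) ∂μ
          ≤ (Real.sqrt (σ^2 + ε)
              + (1-β) * ∑ t ∈ Finset.Icc 1 j, (Real.sqrt β)^(p + 1 + j - t)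
                  * ∫ ω, (h t ω)^2 / Real.sqrt (Vt t ω + ε) ∂μ)
            + (1-β) * (Real.sqrt β)^p * ∫ ω, (h (j+1) ω)^2 / Real.sqrt (Vt (j+1) ω + ε) ∂μ)
        refine this.trans (le_of_eq ?_)
        ring
  -- specialize to p = 0 and rewrite to Vt
  have KEY0 : ∀ k, 1 ≤ k →
      ∫ ω, Real.sqrt (Vt k ω + ε) ∂μ
        ≤ Real.sqrt (σ^2 + ε)
          + (1-β) * ∑ t ∈ Finset.Icc 1 k, (Real.sqrt β)^(k - t)
              * ∫ ω, (h t ω)^2 / Real.sqrt (Vt t ω + ε) ∂μ := by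
    intro k hk
    have hkey := KEY k hk 0
    have e1 : (fun ω => Real.sqrt (Vt k ω + ε))
        = fun ω => Real.sqrt (β^(0+1) * V (k-1) ω + β^0*(1-β)*((h k ω)^2 + σ^2)
            + (σ^2*(1-(β:ℝ)^0) + ε)) := by
      funext ω; congr 1; rw [hVt k hk ω]; ring
    have e2 : ∑ t ∈ Finset.Icc 1 k, (Real.sqrt β)^(0 + k - t)
          * ∫ ω, (h t ω)^2 / Real.sqrt (Vt t ω + ε) ∂μ
        = ∑ t ∈ Finset.Icc 1 k, (Real.sqrt β)^(k - t)
          * ∫ ω, (h t ω)^2 / Real.sqrt (Vt t ω + ε) ∂μ := by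
      refine Finset.sum_congr rfl fun t ht => ?_
      rw [show 0 + k - t = k - t from by omega]
    rw [e1]
    rw [e2] at hkey
    exact hkey
  -- final assembly
  have hsb0 : 0 ≤ Real.sqrt β := Real.sqrt_nonneg β
  have hsb1 : Real.sqrt β < 1 := by
    rw [show (1:ℝ) = Real.sqrt 1 from (Real.sqrt_one).symm]
    exact Real.sqrt_lt_sqrt hβ0 hβ1
  have hsbsq : Real.sqrt β * Real.sqrt β = β := Real.mul_self_sqrt hβ0
  have GEO : ∀ t, t ≤ K → ∑ k ∈ Finset.Icc t K, (Real.sqrt β)^(k - t) ≤ 1 / (1 - Real.sqrt β) := by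
    intro t _
    have e : ∑ k ∈ Finset.Icc t K, (Real.sqrt β)^(k - t)
        = ∑ i ∈ Finset.range (K + 1 - t), (Real.sqrt β)^i := by
      rw [show Finset.Icc t K = Finset.Ico t (K+1) from rfl, Finset.sum_Ico_eq_sum_range]
      refine Finset.sum_congr rfl fun i _ => ?_
      rw [show t + i - t = i from by omega]
    rw [e]
    exact aux_geom hsb0 hsb1 _
  calc ∑ k ∈ Finset.Icc 1 K, ∫ ω, Real.sqrt (Vt k ω + ε) ∂μ
      ≤ ∑ k ∈ Finset.Icc 1 K, (Real.sqrt (σ^2 + ε)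
          + (1-β) * ∑ t ∈ Finset.Icc 1 k, (Real.sqrt β)^(k - t)
              * ∫ ω, (h t ω)^2 / Real.sqrt (Vt t ω + ε) ∂μ) :=
        Finset.sum_le_sum fun k hk => KEY0 k (Finset.mem_Icc.1 hk).1
    _ = (K:ℝ) * Real.sqrt (σ^2 + ε)
        + (1-β) * ∑ k ∈ Finset.Icc 1 K, ∑ t ∈ Finset.Icc 1 k, (Real.sqrt β)^(k - t)
            * ∫ ω, (h t ω)^2 / Real.sqrt (Vt t ω + ε) ∂μ := by
        rw [Finset.sum_add_distrib, Finset.sum_const, ← Finset.mul_sum]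
        simp [Nat.card_Icc, nsmul_eq_mul]
    _ = (K:ℝ) * Real.sqrt (σ^2 + ε)
        + (1-β) * ∑ t ∈ Finset.Icc 1 K, ∑ k ∈ Finset.Icc t K, (Real.sqrt β)^(k - t)
            * ∫ ω, (h t ω)^2 / Real.sqrt (Vt t ω + ε) ∂μ := by
        congr 1
        congr 1
        apply Finset.sum_comm'
        intro k t
        simp only [Finset.mem_Icc]
        omega
    _ = (K:ℝ) * Real.sqrt (σ^2 + ε)
        + (1-β) * ∑ t ∈ Finset.Icc 1 K, (∑ k ∈ Finset.Icc t K, (Real.sqrt β)^(k - t))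
            * ∫ ω, (h t ω)^2 / Real.sqrt (Vt t ω + ε) ∂μ := by
        congr 1
        congr 1
        refine Finset.sum_congr rfl fun t _ => ?_
        rw [Finset.sum_mul]
    _ ≤ (K:ℝ) * Real.sqrt (σ^2 + ε)
        + (1-β) * ∑ t ∈ Finset.Icc 1 K, (1 / (1 - Real.sqrt β))
            * ∫ ω, (h t ω)^2 / Real.sqrt (Vt t ω + ε) ∂μ := by
        refine add_le_add le_rfl ?_
        apply mul_le_mul_of_nonneg_left _ hβ1'
        apply Finset.sum_le_sum
        intro t ht
        exact mul_le_mul_of_nonneg_right (GEO t (Finset.mem_Icc.1 ht).2) (hBnn t)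
    _ = (K:ℝ) * Real.sqrt (σ^2 + ε)
        + (1 + Real.sqrt β) * ∑ t ∈ Finset.Icc 1 K,
            ∫ ω, (h t ω)^2 / Real.sqrt (Vt t ω + ε) ∂μ := by
        rw [← Finset.mul_sum, ← mul_assoc]
        congr 2
        have hne : 1 - Real.sqrt β ≠ 0 := by linarith
        field_simp
        nlinarith [hsbsq]
end
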